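/- Suppose n items are placed into m slots where the slot of each item is chosen i.i.d. uniformly at random among the m slots (via a balls-and-bins assignment of slot sizes followed by a uniformly random ordering of items). Then for each item e, the random variable Y_e giving the slot of e is uniform on [m], and the Y_e for distinct items are mutually independent. -/

import Mathlib

/-!
Given the bins `b` and the ordering `σ`, the slot of item `e` is forced to be
`b (Tuple.sort b (σ⁻¹ e))`: position `k` of the window lies in the block of the bin of the
`k`-th ball in bin-sorted order. The map `(b, σ) ↦ (slots, σ * (sort b)⁻¹)` is a bijection of
the sample space, with inverse `(g, τ) ↦ (g ∘ τ, τ * sort (g ∘ τ))`, so the slot vector is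
distributed as the first coordinate of a uniform pair, i.e. uniformly on `Fin n → Fin m`.
-/

open Finset
open scoped Nat

lemma card_filter_fst_comp_equiv {α β γ : Type*} [Fintype α] [Fintype β] [Fintype γ]
    (Φ : γ ≃ α × β) (p : α → Prop) [DecidablePred p] :
    #{x | p (Φ x).1} = #{a | p a} * Fintype.card β := by
  rw [card_equiv Φ (t := {y : α × β | p y.1}) (by simp), ← univ_product_univ,
    filter_product_left, card_product, Finset.card_univ]

lemma card_filter_apply_eq {α β : Type*} [Fintype α] [DecidableEq α] [Fintype β] [DecidableEq β]
    (a : α) (b : β) : #{g : α → β | g a = b} = Fintype.card β ^ (Fintype.card α - 1) := by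
  simpa using Fintype.card_filter_piFinset_const_eq_of_mem (univ : Finset β) a (mem_univ b)

section Window

variable {α β : Type*} [Fintype α] [LinearOrder β]

/-- The (`0`-indexed) positions of the window that make up slot `j`. -/
def binBlock (b : α → β) (j : β) : Finset ℕ :=
  Ico #{l | b l < j} #{l | b l ≤ j}

lemma eq_of_mem_binBlock {b : α → β} {k : ℕ} {j j' : β}
    (h : k ∈ binBlock b j) (h' : k ∈ binBlock b j') : j = j' := by
  have key : ∀ {i i' : β}, k ∈ binBlock b i → k ∈ binBlock b i' → ¬i < i' := by
    intro i i' hi hi' hlt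
    have hle : #{l | b l ≤ i} ≤ #{l | b l < i'} :=
      card_le_card (monotone_filter_right _ fun _ _ hl => hl.trans_lt hlt)
    exact (((mem_Ico.1 hi).2.trans_le hle).trans_le (mem_Ico.1 hi').1).false
  exact le_antisymm (not_lt.1 (key h' h)) (not_lt.1 (key h h'))

lemma mem_binBlock_sort {n : ℕ} (b : Fin n → β) (k : Fin n) :
    (k : ℕ) ∈ binBlock b (b (Tuple.sort b k)) := by
  set s := Tuple.sort b
  have hs : Monotone (b ∘ s) := Tuple.monotone_sort b
  have hcomp : ∀ (p : β → Prop) [DecidablePred p], #{l | p (b (s l))} = #{l | p (b l)} :=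
    fun p _ => card_equiv s (by simp)
  rw [binBlock, mem_Ico, ← hcomp (· < b (s k)), ← hcomp (· ≤ b (s k))]
  constructor
  · calc #{l | b (s l) < b (s k)} ≤ #(Iio k) :=
          card_le_card fun l hl => mem_Iio.2 (hs.reflect_lt (mem_filter.1 hl).2)
      _ = k := Fin.card_Iio k
  · calc (k : ℕ) < #(Iic k) := by simp
      _ ≤ #{l | b (s l) ≤ b (s k)} :=
          card_le_card fun l hl => mem_filter.2 ⟨mem_univ l, hs (mem_Iic.1 hl)⟩

variable {n : ℕ}

def windowSlot (ω : (Fin n → β) × Equiv.Perm (Fin n)) (e : Fin n) : β :=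
  ω.1 (Tuple.sort ω.1 (ω.2.symm e))

lemma eq_windowSlot_of_mem_binBlock {ω : (Fin n → β) × Equiv.Perm (Fin n)} {e : Fin n} {j : β}
    (h : ((ω.2.symm e : Fin n) : ℕ) ∈ binBlock ω.1 j) : j = windowSlot ω e :=
  eq_of_mem_binBlock h (mem_binBlock_sort ω.1 _)

def windowEquiv : (Fin n → β) × Equiv.Perm (Fin n) ≃ (Fin n → β) × Equiv.Perm (Fin n) where
  toFun ω := (windowSlot ω, ω.2 * (Tuple.sort ω.1)⁻¹)
  invFun ω := (ω.1 ∘ ω.2, ω.2 * Tuple.sort (ω.1 ∘ ω.2))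
  left_inv := by
    rintro ⟨b, σ⟩
    have hb : windowSlot (b, σ) ∘ ⇑(σ * (Tuple.sort b)⁻¹) = b := by
      funext k; simp [windowSlot]
    exact Prod.ext hb (by dsimp only; rw [hb, inv_mul_cancel_right])
  right_inv := by
    rintro ⟨g, τ⟩
    ext e
    · simp [windowSlot, Equiv.Perm.mul_def]
    · simp

lemma windowEquiv_fst (ω : (Fin n → β) × Equiv.Perm (Fin n)) :
    (windowEquiv ω).1 = windowSlot ω := rfl

lemma card_filter_windowSlot [Fintype β] (p : (Fin n → β) → Prop) [DecidablePred p] :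
    #{ω | p (windowSlot ω)} = #{g | p g} * n ! := by
  have h := card_filter_fst_comp_equiv windowEquiv p
  simp only [windowEquiv_fst, Fintype.card_perm, Fintype.card_fin] at h
  exact h

end Window

theorem slots_iid_uniform_general (n m : ℕ)
    (Y : (Fin n → Fin m) × Equiv.Perm (Fin n) → Fin n → Fin m)
    (hY : ∀ ω : (Fin n → Fin m) × Equiv.Perm (Fin n), ∀ e : Fin n,
      (∑ i ∈ univ.filter (fun i : Fin m => i < Y ω e),
          (univ.filter (fun l : Fin n => ω.1 l = i)).card)
        ≤ ((ω.2.symm e : Fin n) : ℕ) ∧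
      ((ω.2.symm e : Fin n) : ℕ) <
        ∑ i ∈ univ.filter (fun i : Fin m => i ≤ Y ω e),
          (univ.filter (fun l : Fin n => ω.1 l = i)).card) :
    (∀ e : Fin n, ∀ j : Fin m,
      ((univ.filter (fun ω : (Fin n → Fin m) × Equiv.Perm (Fin n) => Y ω e = j)).card : ℝ)
          / ((Fintype.card ((Fin n → Fin m) × Equiv.Perm (Fin n))) : ℝ)
        = 1 / (m : ℝ)) ∧
    (∀ g : Fin n → Fin m,
      ((univ.filter (fun ω : (Fin n → Fin m) × Equiv.Perm (Fin n) =>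
            ∀ e : Fin n, Y ω e = g e)).card : ℝ)
          / ((Fintype.card ((Fin n → Fin m) × Equiv.Perm (Fin n))) : ℝ)
        = ∏ e : Fin n,
            ((univ.filter (fun ω : (Fin n → Fin m) × Equiv.Perm (Fin n) =>
                Y ω e = g e)).card : ℝ)
              / ((Fintype.card ((Fin n → Fin m) × Equiv.Perm (Fin n))) : ℝ)) := by
  have hYslot : ∀ ω, Y ω = windowSlot ω := fun ω => funext fun e =>
    eq_windowSlot_of_mem_binBlock <| by
      simpa only [binBlock, mem_Ico, sum_card_fiberwise_eq_card_filter, mem_filter, mem_univ,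
        true_and] using hY ω e
  have hΩ : Fintype.card ((Fin n → Fin m) × Equiv.Perm (Fin n)) = m ^ n * n ! := by
    simp [Fintype.card_perm]
  have hfac : (n ! : ℝ) ≠ 0 := by positivity
  have hmarginal : ∀ (e : Fin n) (j : Fin m),
      (#{ω | Y ω e = j} : ℝ) / Fintype.card ((Fin n → Fin m) × Equiv.Perm (Fin n)) = 1 / m := by
    intro e j
    have hm : (m : ℝ) ≠ 0 := by exact_mod_cast j.pos.ne'
    simp only [hYslot]
    rw [card_filter_windowSlot (· e = j), card_filter_apply_eq, hΩ, Fintype.card_fin,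
      Fintype.card_fin, ← pow_sub_one_mul e.pos.ne' m]
    push_cast
    field_simp
  refine ⟨hmarginal, fun g => ?_⟩
  rw [prod_congr rfl fun e _ => hmarginal e (g e)]
  simp only [hYslot, ← funext_iff]
  rw [card_filter_windowSlot (· = g), filter_eq', if_pos (mem_univ g), card_singleton, hΩ]
  push_cast
  rw [one_mul, div_mul_cancel_right₀ hfac, prod_const, Finset.card_univ, Fintype.card_fin,
    one_div, inv_pow]

/-- In the `(α,β)`-window construction, slot sizes come from throwing `n` balls
uniformly and independently into `m` bins (`b : Fin n → Fin m`), and items are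
ordered by a uniformly random permutation `σ`; item `e` lands in the slot whose
block of positions contains `σ⁻¹ e`.  Then the slot `Y e` of each item is
uniform on the `m` slots, and the slots of distinct items are mutually
independent. -/
theorem slots_iid_uniform (n m : ℕ) (hn : 1 ≤ n) (hm : 1 ≤ m)
    (Y : (Fin n → Fin m) × Equiv.Perm (Fin n) → Fin n → Fin m)
    (hY : ∀ ω : (Fin n → Fin m) × Equiv.Perm (Fin n), ∀ e : Fin n,
      (∑ i ∈ univ.filter (fun i : Fin m => i < Y ω e),
          (univ.filter (fun l : Fin n => ω.1 l = i)).card)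
        ≤ ((ω.2.symm e : Fin n) : ℕ) ∧
      ((ω.2.symm e : Fin n) : ℕ) <
        ∑ i ∈ univ.filter (fun i : Fin m => i ≤ Y ω e),
          (univ.filter (fun l : Fin n => ω.1 l = i)).card) :
    (∀ e : Fin n, ∀ j : Fin m,
      ((univ.filter (fun ω : (Fin n → Fin m) × Equiv.Perm (Fin n) => Y ω e = j)).card : ℝ)
          / ((Fintype.card ((Fin n → Fin m) × Equiv.Perm (Fin n))) : ℝ)
        = 1 / (m : ℝ)) ∧
    (∀ g : Fin n → Fin m,
      ((univ.filter (fun ω : (Fin n → Fin m) × Equiv.Perm (Fin n) =>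
            ∀ e : Fin n, Y ω e = g e)).card : ℝ)
          / ((Fintype.card ((Fin n → Fin m) × Equiv.Perm (Fin n))) : ℝ)
        = ∏ e : Fin n,
            ((univ.filter (fun ω : (Fin n → Fin m) × Equiv.Perm (Fin n) =>
                Y ω e = g e)).card : ℝ)
              / ((Fintype.card ((Fin n → Fin m) × Equiv.Perm (Fin n))) : ℝ)) :=
  slots_iid_uniform_general n m Y hY
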